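/- Let G be an infinite residually finite group with scale (Γ_n) and X the odometer. The stabilized automorphism group Aut^∞(X,G)_L = ⋃_{H ∈ I(G)} Aut(X,H)_L, the union over all finite-index subgroups H of G, satisfies Aut^∞(X,G)_L = ⋃_n Aut(X, Γ_n)_L = [[X]]_R, the topological full group of the action of X on itself by right multiplication. -/

import Mathlib

/-!
All three conditions on `f` amount to openness of the subgroup of those `t` with
`f (t * x) = t * f x` for all `x`. It is closed, so once it contains `τ(H)` it contains the
closure of `τ(H)`; for `H` of finite index this closure is a closed subgroup of finite index
(as `τ(G)` is dense), hence open. Conversely an open subgroup contains a level kernel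
`[1]ₙ ⊇ τ(Γₙ)`. On the other side, `f x = x * (ξ x)⁻¹` forces `ξ x = (f x)⁻¹ * x`, whose left
periods form exactly that subgroup; on a compact group, `ξ` is locally constant iff its periods
are a neighbourhood of `1`.
-/

open scoped Pointwise

noncomputable section
namespace OdoPaper


variable {G : Type*} [Group G]

/-- Each finite quotient carries the discrete topology. -/
instance quotTop (Γ : Subgroup G) : TopologicalSpace (G ⧸ Γ) := ⊥
instance quotDisc (Γ : Subgroup G) : DiscreteTopology (G ⧸ Γ) := ⟨rfl⟩

/-- The natural projection between coset spaces of nested subgroups. -/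
def projOfLE {H K : Subgroup G} (h : H ≤ K) : G ⧸ H → G ⧸ K :=
  Quotient.map' id fun a b hab => by
    rw [QuotientGroup.leftRel_apply] at hab ⊢
    exact h hab

/-- The odometer space for a (not necessarily normal) decreasing sequence of subgroups. -/
abbrev OdoSp (Γ : ℕ → Subgroup G) (hdec : ∀ n, Γ (n + 1) ≤ Γ n) : Type _ :=
  {x : ∀ n, G ⧸ Γ n // ∀ n, projOfLE (hdec n) (x (n + 1)) = x n}

/-- The bonding homomorphisms for a decreasing sequence of normal subgroups. -/
def odoMap (Γ : ℕ → Subgroup G) [∀ n, (Γ n).Normal] (hdec : ∀ n, Γ (n + 1) ≤ Γ n) (n : ℕ) :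
    G ⧸ Γ (n + 1) →* G ⧸ Γ n :=
  QuotientGroup.map _ _ (MonoidHom.id G) (hdec n)

/-- The odometer associated to a decreasing sequence of normal subgroups, as a subgroup of
the product of the finite quotients. -/
def Odo (Γ : ℕ → Subgroup G) [∀ n, (Γ n).Normal] (hdec : ∀ n, Γ (n + 1) ≤ Γ n) :
    Subgroup (∀ n, G ⧸ Γ n) where
  carrier := {x | ∀ n, odoMap Γ hdec n (x (n + 1)) = x n}
  one_mem' := fun n => map_one _
  mul_mem' := fun {a b} ha hb n => by
    simp only [Pi.mul_apply, map_mul, ha n, hb n]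
  inv_mem' := fun {a} ha n => by
    simp only [Pi.inv_apply, map_inv, ha n]

/-- The canonical homomorphism from `G` to its odometer. -/
def tau (Γ : ℕ → Subgroup G) [∀ n, (Γ n).Normal] (hdec : ∀ n, Γ (n + 1) ≤ Γ n) :
    G →* Odo Γ hdec where
  toFun g := ⟨fun n => QuotientGroup.mk g, fun n => rfl⟩
  map_one' := rfl
  map_mul' g₁ g₂ := rfl

/-- Cylinder set of level `n` through the coset `a`. -/
def cyl (Γ : ℕ → Subgroup G) [∀ n, (Γ n).Normal] (hdec : ∀ n, Γ (n + 1) ≤ Γ n) (n : ℕ)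
    (a : G ⧸ Γ n) : Set (Odo Γ hdec) :=
  {x | (x : ∀ k, G ⧸ Γ k) n = a}

/-- The metric on the odometer: `d(x,y) = 2^{-min{n : xₙ ≠ yₙ}}`. -/
def odoDist {Γ : ℕ → Subgroup G} [∀ n, (Γ n).Normal] {hdec : ∀ n, Γ (n + 1) ≤ Γ n}
    (x y : Odo Γ hdec) : ℝ :=
  letI := Classical.dec (x = y)
  if x = y then 0
  else (1 / 2 : ℝ) ^ sInf {n : ℕ | (x : ∀ k, G ⧸ Γ k) n ≠ (y : ∀ k, G ⧸ Γ k) n}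



/-- The group of self-homeomorphisms of a space, with `(f * g) x = f (g x)`. -/
instance homeoGroup (X : Type*) [TopologicalSpace X] : Group (X ≃ₜ X) where
  mul f g := g.trans f
  one := Homeomorph.refl X
  inv := Homeomorph.symm
  mul_assoc _ _ _ := Homeomorph.ext fun _ => rfl
  one_mul _ := Homeomorph.ext fun _ => rfl
  mul_one _ := Homeomorph.ext fun _ => rfl
  inv_mul_cancel f := Homeomorph.ext fun x => f.symm_apply_apply x

theorem homeo_mul_apply {X : Type*} [TopologicalSpace X] (f g : X ≃ₜ X) (x : X) :
    (f * g) x = f (g x) := rfl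

theorem homeo_inv_apply {X : Type*} [TopologicalSpace X] (f : X ≃ₜ X) (x : X) :
    f⁻¹ x = f.symm x := rfl

section Full

variable (X : Type*) [Group X] [TopologicalSpace X]

/-- Membership in the topological full group of the right translation action of `X`
on itself: on each piece of a finite clopen partition, `f` is a right translation. -/
def InFullR (f : X ≃ₜ X) : Prop :=
  ∃ ξ : X → X, IsLocallyConstant ξ ∧ (Set.range ξ).Finite ∧ ∀ x, f x = x * (ξ x)⁻¹

/-- Membership in the topological full group of the left translation action. -/
def InFullL (f : X ≃ₜ X) : Prop :=
  ∃ ξ : X → X, IsLocallyConstant ξ ∧ (Set.range ξ).Finite ∧ ∀ x, f x = ξ x * x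

/-- The topological full group `[[X]]_R` of the right translation action. -/
def TFGR : Subgroup (X ≃ₜ X) where
  carrier := {f | InFullR X f}
  one_mem' := ⟨fun _ => 1, IsLocallyConstant.const 1,
    (Set.finite_singleton 1).subset (Set.range_subset_iff.2 fun _ => rfl),
    fun x => by simp [homeo_mul_apply]⟩
  mul_mem' := by
    rintro f g ⟨ξf, hf1, hf2, hf3⟩ ⟨ξg, hg1, hg2, hg3⟩
    refine ⟨fun x => ξf (g x) * ξg x,
      (hf1.comp_continuous g.continuous).mul hg1,
      (hf2.mul hg2).subset ?_, fun x => ?_⟩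
    · rintro y ⟨x, rfl⟩
      exact Set.mul_mem_mul ⟨g x, rfl⟩ ⟨x, rfl⟩
    · show f (g x) = x * (ξf (g x) * ξg x)⁻¹
      rw [mul_inv_rev, ← mul_assoc, ← hg3 x, ← hf3 (g x)]
  inv_mem' := by
    rintro f ⟨ξ, h1, h2, h3⟩
    refine ⟨fun x => (ξ (f.symm x))⁻¹,
      (h1.comp_continuous f.symm.continuous).inv, (h2.inv).subset ?_, fun x => ?_⟩
    · rintro y ⟨x, rfl⟩
      exact Set.inv_mem_inv.2 ⟨f.symm x, rfl⟩
    · have h := h3 (f.symm x)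
      rw [f.apply_symm_apply] at h
      show f.symm x = x * ((ξ (f.symm x))⁻¹)⁻¹
      rw [inv_inv]
      exact (eq_mul_inv_iff_mul_eq.mp h).symm

/-- The topological full group `[[X]]_L` of the left translation action. -/
def TFGL : Subgroup (X ≃ₜ X) where
  carrier := {f | InFullL X f}
  one_mem' := ⟨fun _ => 1, IsLocallyConstant.const 1,
    (Set.finite_singleton 1).subset (Set.range_subset_iff.2 fun _ => rfl),
    fun x => by simp⟩
  mul_mem' := by
    rintro f g ⟨ξf, hf1, hf2, hf3⟩ ⟨ξg, hg1, hg2, hg3⟩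
    refine ⟨fun x => ξf (g x) * ξg x,
      (hf1.comp_continuous g.continuous).mul hg1,
      (hf2.mul hg2).subset ?_, fun x => ?_⟩
    · rintro y ⟨x, rfl⟩
      exact Set.mul_mem_mul ⟨g x, rfl⟩ ⟨x, rfl⟩
    · show f (g x) = ξf (g x) * ξg x * x
      rw [mul_assoc, ← hg3 x, ← hf3 (g x)]
  inv_mem' := by
    rintro f ⟨ξ, h1, h2, h3⟩
    refine ⟨fun x => (ξ (f.symm x))⁻¹,
      (h1.comp_continuous f.symm.continuous).inv, (h2.inv).subset ?_, fun x => ?_⟩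
    · rintro y ⟨x, rfl⟩
      exact Set.inv_mem_inv.2 ⟨f.symm x, rfl⟩
    · have h := h3 (f.symm x)
      rw [f.apply_symm_apply] at h
      show f.symm x = (ξ (f.symm x))⁻¹ * x
      exact eq_inv_mul_iff_mul_eq.mpr h.symm

/-- `f` commutes with left translation by every element of `S`. -/
def IsAutLOn (S : Set X) (f : X ≃ₜ X) : Prop :=
  ∀ s ∈ S, ∀ x, f (s * x) = s * f x

theorem IsAutLOn.one (S : Set X) : IsAutLOn X S 1 := fun _ _ _ => rfl

theorem IsAutLOn.mul {S T : Set X} {f g : X ≃ₜ X} (hf : IsAutLOn X S f)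
    (hg : IsAutLOn X T g) : IsAutLOn X (S ∩ T) (f * g) := fun s hs x => by
  rw [homeo_mul_apply, hg s hs.2, hf s hs.1, homeo_mul_apply]

theorem IsAutLOn.inv {S : Set X} {f : X ≃ₜ X} (hf : IsAutLOn X S f) :
    IsAutLOn X S f⁻¹ := fun s hs x => by
  rw [homeo_inv_apply]
  have h := hf s hs (f.symm x)
  rw [f.apply_symm_apply] at h
  rw [← h, f.symm_apply_apply]
  rfl

/-- The group of automorphisms of the left translation action of `S ⊆ X` on `X`. -/
def AutLgrp (S : Set X) : Subgroup (X ≃ₜ X) where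
  carrier := {f | IsAutLOn X S f}
  one_mem' := IsAutLOn.one X S
  mul_mem' := fun {f g} hf hg => by
    have := IsAutLOn.mul X (S := S) (T := S) hf hg
    simpa using this
  inv_mem' := fun {f} hf => IsAutLOn.inv X hf

end Full



section Stab
variable (X : Type*) [Group X] [TopologicalSpace X]

/-- A (finitely additive) invariant mean: the classical definition of amenability for
(discrete) groups. -/
def IsAmenable (Γ : Type*) [Group Γ] : Prop :=
  ∃ m : Set Γ → ℝ, (∀ A, 0 ≤ m A) ∧ m Set.univ = 1 ∧
    (∀ A B, Disjoint A B → m (A ∪ B) = m A + m B) ∧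
    ∀ (g : Γ) (A), m ((g * ·) '' A) = m A

/-- `C` is a minimal component for the left translation action of the subset `T ⊆ X`. -/
def IsMinCompL (T : Set X) (C : Set X) : Prop :=
  C.Nonempty ∧ IsClosed C ∧ (∀ t ∈ T, ∀ x ∈ C, t * x ∈ C) ∧
    ∀ x ∈ C, C ⊆ closure ((· * x) '' T)

/-- The subgroup `[[X]]_{U,L}` of homeomorphisms acting as a left translation on each
left coset of `U`. -/
def fullUL (U : Subgroup X) : Subgroup (X ≃ₜ X) where
  carrier := {f | ∀ a : X, ∃ ξ : X, ∀ x : X,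
    (QuotientGroup.mk x : X ⧸ U) = QuotientGroup.mk a → f x = ξ * x}
  one_mem' := fun a => ⟨1, fun x _ => (one_mul x).symm⟩
  mul_mem' := by
    intro f g hf hg a
    obtain ⟨ξg, hξg⟩ := hg a
    obtain ⟨ξf, hξf⟩ := hf (ξg * a)
    refine ⟨ξf * ξg, fun x hx => ?_⟩
    have hx' : (QuotientGroup.mk (ξg * x) : X ⧸ U) = QuotientGroup.mk (ξg * a) := by
      rw [QuotientGroup.eq] at hx ⊢
      simpa [mul_assoc] using hx
    show f (g x) = ξf * ξg * x
    rw [hξg x hx, hξf (ξg * x) hx', mul_assoc]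
  inv_mem' := by
    intro f hf a
    obtain ⟨ξ, hξ⟩ := hf (f.symm a)
    refine ⟨ξ⁻¹, fun x hx => ?_⟩
    have ha : f (f.symm a) = ξ * f.symm a := hξ _ rfl
    rw [f.apply_symm_apply] at ha
    have hx' : (QuotientGroup.mk (ξ⁻¹ * x) : X ⧸ U) = QuotientGroup.mk (f.symm a) := by
      rw [QuotientGroup.eq] at hx ⊢
      have : f.symm a = ξ⁻¹ * a := eq_inv_mul_iff_mul_eq.mpr ha.symm
      rw [this]
      simpa [mul_assoc] using hx
    have := hξ (ξ⁻¹ * x) hx'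
    rw [mul_inv_cancel_left] at this
    show f.symm x = ξ⁻¹ * x
    conv_lhs => rw [← this]
    rw [f.symm_apply_apply]
end Stab

section Full0
variable (X : Type*) [Group X] [TopologicalSpace X]

/-- The subgroup `[[X]]⁰_{U,L}` of elements of the topological full group preserving each
left coset `aU` and acting on it by left multiplication by an element of `aUa⁻¹`. -/
def full0L (U : Subgroup X) : Subgroup (X ≃ₜ X) where
  carrier := {f | ∀ a : X, ∃ u ∈ U, ∀ x : X,
    (QuotientGroup.mk x : X ⧸ U) = QuotientGroup.mk a → f x = a * u * a⁻¹ * x}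
  one_mem' := fun a => ⟨1, U.one_mem, fun x _ => by
    show x = a * 1 * a⁻¹ * x
    simp⟩
  mul_mem' := by
    intro f g hf hg a
    obtain ⟨ug, hugU, hg'⟩ := hg a
    obtain ⟨uf, hufU, hf'⟩ := hf a
    refine ⟨uf * ug, U.mul_mem hufU hugU, fun x hx => ?_⟩
    have hgx : (QuotientGroup.mk (g x) : X ⧸ U) = QuotientGroup.mk a := by
      rw [hg' x hx]
      rw [QuotientGroup.eq] at hx ⊢
      have h : (a * ug * a⁻¹ * x)⁻¹ * a = x⁻¹ * a * ug⁻¹ := by group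
      rw [h]
      exact U.mul_mem hx (U.inv_mem hugU)
    show f (g x) = a * (uf * ug) * a⁻¹ * x
    rw [hf' (g x) hgx, hg' x hx]
    group
  inv_mem' := by
    intro f hf a
    obtain ⟨u, huU, hu⟩ := hf a
    refine ⟨u⁻¹, U.inv_mem huU, fun x hx => ?_⟩
    have hx' : (QuotientGroup.mk (a * u⁻¹ * a⁻¹ * x) : X ⧸ U) = QuotientGroup.mk a := by
      rw [QuotientGroup.eq] at hx ⊢
      have h : (a * u⁻¹ * a⁻¹ * x)⁻¹ * a = x⁻¹ * a * u := by group
      rw [h]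
      exact U.mul_mem hx huU
    have h2 := hu _ hx'
    have h3 : f (a * u⁻¹ * a⁻¹ * x) = x := by rw [h2]; group
    show f.symm x = a * u⁻¹ * a⁻¹ * x
    conv_lhs => rw [← h3]
    rw [f.symm_apply_apply]

end Full0

section StabAut
variable {G : Type*} [Group G]

/-- The stabilized automorphism group of the (left) odometer: homeomorphisms commuting
with the left translation action of some finite-index subgroup of `G`. -/
def stabAut (Γ : ℕ → Subgroup G) [∀ n, (Γ n).Normal] (hdec : ∀ n, Γ (n + 1) ≤ Γ n) :
    Subgroup (↥(Odo Γ hdec) ≃ₜ ↥(Odo Γ hdec)) where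
  carrier := {f | ∃ H : Subgroup G, H.FiniteIndex ∧
    IsAutLOn _ (tau Γ hdec '' (H : Set G)) f}
  one_mem' := ⟨⊤, inferInstance, IsAutLOn.one _ _⟩
  mul_mem' := by
    rintro f g ⟨H₁, h₁, hf⟩ ⟨H₂, h₂, hg⟩
    haveI := h₁; haveI := h₂
    refine ⟨H₁ ⊓ H₂, inferInstance, ?_⟩
    rintro s ⟨γ, hγ, rfl⟩ x
    have hγ' := Subgroup.mem_inf.mp hγ
    rw [homeo_mul_apply, hg _ ⟨γ, hγ'.2, rfl⟩, hf _ ⟨γ, hγ'.1, rfl⟩, homeo_mul_apply]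
  inv_mem' := by
    rintro f ⟨H, h, hf⟩
    exact ⟨H, h, IsAutLOn.inv _ hf⟩

/-- The clopen subgroup `[1]_n` of the odometer (kernel of the projection to level `n`). -/
def levelKer (Γ : ℕ → Subgroup G) [∀ n, (Γ n).Normal] (hdec : ∀ n, Γ (n + 1) ≤ Γ n)
    (n : ℕ) : Subgroup ↥(Odo Γ hdec) :=
  ((Pi.evalMonoidHom (fun k => G ⧸ Γ k) n).comp (Odo Γ hdec).subtype).ker

end StabAut

section Adic

/-- The subgroups `m^n ℤ` of `ℤ`, multiplicatively. -/
def zmSub (m : ℕ) (n : ℕ) : Subgroup (Multiplicative ℤ) :=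
  Subgroup.closure {Multiplicative.ofAdd ((m : ℤ) ^ n)}

theorem zmdec (m : ℕ) : ∀ n, zmSub m (n + 1) ≤ zmSub m n := fun n => by
  rw [zmSub, Subgroup.closure_le]
  intro y hy
  rw [Set.mem_singleton_iff] at hy
  subst hy
  rw [SetLike.mem_coe, zmSub, Subgroup.mem_closure_singleton]
  refine ⟨(m : ℤ), ?_⟩
  rw [← ofAdd_zsmul]
  congr 1
  rw [smul_eq_mul, pow_succ]
  ring

/-- The `m`-adic odometer group `ℤ_m`, the inverse limit of `ℤ/m^nℤ`. -/
def Zm (m : ℕ) : Subgroup (∀ n, Multiplicative ℤ ⧸ zmSub m n) := Odo (zmSub m) (zmdec m)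

/-- The scale of `ℤ²` generated by `(p^n, 0)` and `(0, q^n)`, multiplicatively. -/
def zsqSub (p q : ℕ) (n : ℕ) : Subgroup (Multiplicative (ℤ × ℤ)) :=
  Subgroup.closure {Multiplicative.ofAdd ((((p : ℤ) ^ n, 0) : ℤ × ℤ)),
    Multiplicative.ofAdd ((((0 : ℤ), (q : ℤ) ^ n) : ℤ × ℤ))}

theorem zsqdec (p q : ℕ) : ∀ n, zsqSub p q (n + 1) ≤ zsqSub p q n := fun n => by
  rw [zsqSub, Subgroup.closure_le]
  intro y hy
  rw [Set.mem_insert_iff, Set.mem_singleton_iff] at hy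
  rcases hy with rfl | rfl
  · rw [SetLike.mem_coe]
    have h : (Multiplicative.ofAdd ((((p : ℤ) ^ n, 0) : ℤ × ℤ))) ^ ((p : ℕ) : ℤ) =
        Multiplicative.ofAdd ((((p : ℤ) ^ (n + 1), 0) : ℤ × ℤ)) := by
      rw [← ofAdd_zsmul]
      congr 1
      rw [Prod.smul_mk, smul_eq_mul, smul_eq_mul, pow_succ]
      simp [Prod.ext_iff]; ring
    rw [← h]
    exact Subgroup.zpow_mem _ (Subgroup.subset_closure (by simp [zsqSub])) _
  · rw [SetLike.mem_coe]
    have h : (Multiplicative.ofAdd ((((0 : ℤ), (q : ℤ) ^ n) : ℤ × ℤ))) ^ ((q : ℕ) : ℤ) =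
        Multiplicative.ofAdd ((((0 : ℤ), (q : ℤ) ^ (n + 1)) : ℤ × ℤ)) := by
      rw [← ofAdd_zsmul]
      congr 1
      rw [Prod.smul_mk, smul_eq_mul, smul_eq_mul, pow_succ]
      simp [Prod.ext_iff]; ring
    rw [← h]
    exact Subgroup.zpow_mem _ (Subgroup.subset_closure (by simp [zsqSub])) _

end Adic

/-- `C` is a minimal component of the action of the subgroup `H ≤ G` on `X` via `ρ`. -/
def IsMinCompAct {G X : Type*} [Group G] [TopologicalSpace X] (ρ : G →* (X ≃ₜ X))
    (H : Subgroup G) (C : Set X) : Prop :=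
  C.Nonempty ∧ IsClosed C ∧ (∀ h ∈ H, ∀ x ∈ C, ρ h x ∈ C) ∧
    ∀ x ∈ C, C ⊆ closure {y | ∃ h ∈ H, y = ρ h x}

open Filter Topology

section LeftCommutant

variable {X : Type*} [Group X] [TopologicalSpace X]

def leftCommutant (f : X ≃ₜ X) : Subgroup X where
  carrier := {t | ∀ x, f (t * x) = t * f x}
  one_mem' x := by rw [one_mul, one_mul]
  mul_mem' {s t} hs ht x := by rw [mul_assoc, hs (t * x), ht x, mul_assoc]
  inv_mem' {t} ht x := by
    have h := ht (t⁻¹ * x)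
    rw [mul_inv_cancel_left] at h
    rw [h, inv_mul_cancel_left]

theorem isAutLOn_iff_subset_leftCommutant (S : Set X) (f : X ≃ₜ X) :
    IsAutLOn X S f ↔ S ⊆ leftCommutant f :=
  Iff.rfl

theorem isClosed_leftCommutant [ContinuousMul X] [T2Space X] (f : X ≃ₜ X) :
    IsClosed (leftCommutant f : Set X) := by
  simp only [leftCommutant, Subgroup.coe_set_mk, Submonoid.coe_set_mk, Subsemigroup.coe_set_mk,
    Set.ofPred_forall]
  exact isClosed_iInter fun x =>
    isClosed_eq (f.continuous.comp (continuous_mul_const x)) (continuous_mul_const (f x))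

theorem mem_leftCommutant_iff (f : X ≃ₜ X) (t : X) :
    t ∈ leftCommutant f ↔ ∀ x, (f (t * x))⁻¹ * (t * x) = (f x)⁻¹ * x := by
  refine forall_congr' fun x => ?_
  rw [← mul_assoc, mul_left_inj, inv_mul_eq_iff_eq_mul, eq_mul_inv_iff_mul_eq, eq_comm]

theorem inFullR_iff_isLocallyConstant [CompactSpace X] (f : X ≃ₜ X) :
    InFullR X f ↔ IsLocallyConstant fun x => (f x)⁻¹ * x := by
  constructor
  · rintro ⟨ξ, hξ, -, hf⟩
    convert hξ using 1
    funext x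
    rw [hf, mul_inv_rev, inv_inv, inv_mul_cancel_right]
  · intro h
    exact ⟨_, h, h.range_finite, fun x => by rw [mul_inv_rev, inv_inv, mul_inv_cancel_left]⟩

end LeftCommutant

section LocallyConstant

variable {X Y : Type*} [Group X] [TopologicalSpace X] [ContinuousMul X]

theorem IsLocallyConstant.eventually_forall_apply_mul_eq [CompactSpace X] {φ : X → Y}
    (hφ : IsLocallyConstant φ) : ∀ᶠ t in 𝓝 (1 : X), ∀ x, φ (t * x) = φ x := by
  have h := isCompact_univ.eventually_forall_of_forall_eventually
    (P := fun t x => φ (t * x) = φ x) (x₀ := (1 : X)) fun x _ => by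
      have hmul : Filter.Tendsto (fun p : X × X => p.1 * p.2) (𝓝 (1, x)) (𝓝 x) := by
        simpa using (continuous_mul.tendsto ((1 : X), x))
      filter_upwards [hmul.eventually (hφ.eventually_eq x),
        continuous_snd.tendsto ((1 : X), x) |>.eventually (hφ.eventually_eq x)] with p h₁ h₂
      exact h₁.trans h₂.symm
  exact h.mono fun t ht x => ht x (Set.mem_univ x)

theorem isLocallyConstant_of_eventually_forall_apply_mul_eq {φ : X → Y}
    (h : ∀ᶠ t in 𝓝 (1 : X), ∀ x, φ (t * x) = φ x) : IsLocallyConstant φ := by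
  refine (IsLocallyConstant.iff_eventually_eq φ).2 fun x => ?_
  have hdiv : Filter.Tendsto (fun y => y * x⁻¹) (𝓝 x) (𝓝 1) := by
    simpa using (continuous_mul_const x⁻¹).tendsto x
  filter_upwards [hdiv.eventually h] with y hy
  simpa using hy x

end LocallyConstant

theorem inFullR_iff_isOpen_leftCommutant {X : Type*} [Group X] [TopologicalSpace X]
    [IsTopologicalGroup X] [CompactSpace X] (f : X ≃ₜ X) :
    InFullR X f ↔ IsOpen (leftCommutant f : Set X) := by
  have hperiods :
      {t | ∀ x, (f (t * x))⁻¹ * (t * x) = (f x)⁻¹ * x} = (leftCommutant f : Set X) :=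
    Set.ext fun t => (mem_leftCommutant_iff f t).symm
  rw [inFullR_iff_isLocallyConstant]
  constructor
  · intro h
    refine Subgroup.isOpen_of_mem_nhds _ (g := 1) ?_
    rw [← hperiods]
    exact IsLocallyConstant.eventually_forall_apply_mul_eq h
  · intro h
    refine isLocallyConstant_of_eventually_forall_apply_mul_eq ?_
    show _ ∈ 𝓝 1
    rw [hperiods]
    exact h.mem_nhds (one_mem _)

theorem isOpen_closure_map_of_denseRange {G X : Type*} [Group G] [Group X] [TopologicalSpace X]
    [IsTopologicalGroup X] {τ : G →* X} (hτ : DenseRange τ) (H : Subgroup G) [H.FiniteIndex] :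
    IsOpen ((H.map τ).topologicalClosure : Set X) := by
  set K := (H.map τ).topologicalClosure
  have hK : IsClosed (K : Set X) := (H.map τ).isClosed_topologicalClosure
  have hrange : Set.range τ ⊆ ⋃ q : G ⧸ H, τ q.out • (K : Set X) := by
    rintro _ ⟨g, rfl⟩
    refine Set.mem_iUnion.2 ⟨g, mem_leftCoset_iff _ |>.2 ?_⟩
    have hg : (g : G ⧸ H).out⁻¹ * g ∈ H := QuotientGroup.eq.1 (QuotientGroup.out_eq' _)
    rw [← map_inv, ← map_mul]
    exact (H.map τ).le_topologicalClosure (Subgroup.mem_map_of_mem τ hg)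
  have hcover : ∀ x : X, ∃ q : G ⧸ H, x ∈ τ q.out • (K : Set X) := fun x =>
    Set.mem_iUnion.1 <|
      closure_minimal hrange (isClosed_iUnion_of_finite fun q => hK.smul _) (hτ x)
  have : Finite (X ⧸ K) := Finite.of_surjective (fun q : G ⧸ H => (τ q.out : X ⧸ K)) <| by
    refine QuotientGroup.mk_surjective.forall.2 fun x => ?_
    obtain ⟨q, hq⟩ := hcover x
    exact ⟨q, QuotientGroup.eq.2 (mem_leftCoset_iff _ |>.1 hq)⟩
  have : K.FiniteIndex := Subgroup.finiteIndex_of_finite_quotient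
  exact K.isOpen_of_isClosed_of_finiteIndex hK

section Odometer

variable (Γ : ℕ → Subgroup G) [∀ n, (Γ n).Normal] (hdec : ∀ n, Γ (n + 1) ≤ Γ n)

theorem odo_coord_eq_of_le (x y : Odo Γ hdec) {m n : ℕ} (hmn : m ≤ n)
    (h : x.1 n = y.1 n) : x.1 m = y.1 m := by
  induction n, hmn using Nat.le_induction with
  | base => exact h
  | succ n _ ih => exact ih (by rw [← x.2 n, ← y.2 n, h])

theorem odo_exists_coord_eq_subset_of_mem_nhds {x : Odo Γ hdec} {U : Set (Odo Γ hdec)}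
    (hU : U ∈ 𝓝 x) : ∃ n, {y : Odo Γ hdec | y.1 n = x.1 n} ⊆ U := by
  obtain ⟨V, hV, hVU⟩ := (nhds_subtype _ x ▸ hU : U ∈ Filter.comap Subtype.val (𝓝 x.1))
  rw [nhds_pi, Filter.mem_pi'] at hV
  obtain ⟨I, W, hW, hWV⟩ := hV
  refine ⟨I.sup id, fun y hy => hVU (hWV fun k hk => ?_)⟩
  rw [odo_coord_eq_of_le Γ hdec y x (m := k) (Finset.le_sup (f := id) hk) hy]
  exact mem_of_mem_nhds (hW k)

theorem denseRange_tau : DenseRange (tau Γ hdec) := fun x =>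
  mem_closure_iff_nhds.2 fun U hU => by
    obtain ⟨n, hn⟩ := odo_exists_coord_eq_subset_of_mem_nhds Γ hdec hU
    obtain ⟨g, hg⟩ := QuotientGroup.mk_surjective (x.1 n)
    exact ⟨tau Γ hdec g, hn hg, g, rfl⟩

theorem map_tau_le_levelKer (n : ℕ) : (Γ n).map (tau Γ hdec) ≤ levelKer Γ hdec n := by
  rintro _ ⟨g, hg, rfl⟩
  exact (QuotientGroup.eq_one_iff g).2 hg

theorem exists_levelKer_le_of_isOpen {K : Subgroup (Odo Γ hdec)}
    (hK : IsOpen (K : Set (Odo Γ hdec))) :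
    ∃ n, levelKer Γ hdec n ≤ K :=
  odo_exists_coord_eq_subset_of_mem_nhds Γ hdec (hK.mem_nhds K.one_mem)

instance odo_compactSpace [∀ n, (Γ n).FiniteIndex] : CompactSpace (Odo Γ hdec) := by
  refine isCompact_iff_compactSpace.1 (IsClosed.isCompact ?_)
  simp only [Odo, Subgroup.coe_set_mk, Submonoid.coe_set_mk, Subsemigroup.coe_set_mk,
    Set.ofPred_forall]
  exact isClosed_iInter fun n => isClosed_eq
    (continuous_of_discreteTopology.comp (continuous_apply (n + 1))) (continuous_apply n)

theorem isAutLOn_tau_iff (H : Subgroup G) (f : Odo Γ hdec ≃ₜ Odo Γ hdec) :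
    IsAutLOn _ (tau Γ hdec '' (H : Set G)) f ↔ H.map (tau Γ hdec) ≤ leftCommutant f := by
  rw [isAutLOn_iff_subset_leftCommutant, ← Subgroup.coe_map, SetLike.coe_subset_coe]

theorem isOpen_leftCommutant_of_isAutLOn_tau (H : Subgroup G) [H.FiniteIndex]
    {f : Odo Γ hdec ≃ₜ Odo Γ hdec} (hf : IsAutLOn _ (tau Γ hdec '' (H : Set G)) f) :
    IsOpen (leftCommutant f : Set (Odo Γ hdec)) :=
  Subgroup.isOpen_mono
    (Subgroup.topologicalClosure_minimal _ ((isAutLOn_tau_iff Γ hdec H f).1 hf)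
      (isClosed_leftCommutant f))
    (isOpen_closure_map_of_denseRange (denseRange_tau Γ hdec) H)

theorem exists_isAutLOn_tau_of_isOpen_leftCommutant {f : Odo Γ hdec ≃ₜ Odo Γ hdec}
    (hf : IsOpen (leftCommutant f : Set (Odo Γ hdec))) :
    ∃ n, IsAutLOn _ (tau Γ hdec '' (Γ n : Set G)) f := by
  obtain ⟨n, hn⟩ := exists_levelKer_le_of_isOpen Γ hdec hf
  exact ⟨n, (isAutLOn_tau_iff Γ hdec _ f).2 ((map_tau_le_levelKer Γ hdec n).trans hn)⟩

theorem mem_stabAut_iff_isOpen_leftCommutant [∀ n, (Γ n).FiniteIndex]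
    (f : Odo Γ hdec ≃ₜ Odo Γ hdec) :
    f ∈ stabAut Γ hdec ↔ IsOpen (leftCommutant f : Set (Odo Γ hdec)) := by
  refine ⟨fun ⟨H, _, hf⟩ => isOpen_leftCommutant_of_isAutLOn_tau Γ hdec H hf, fun h => ?_⟩
  obtain ⟨n, hn⟩ := exists_isAutLOn_tau_of_isOpen_leftCommutant Γ hdec h
  exact ⟨Γ n, inferInstance, hn⟩

end Odometer

theorem stmt17_general {G : Type*} [Group G] (Γ : ℕ → Subgroup G) [∀ n, (Γ n).Normal]
    [∀ n, (Γ n).FiniteIndex] (hdec : ∀ n, Γ (n + 1) ≤ Γ n) :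
    ∀ f : ↥(Odo Γ hdec) ≃ₜ ↥(Odo Γ hdec),
      (f ∈ stabAut Γ hdec ↔ ∃ n, IsAutLOn ↥(Odo Γ hdec) (tau Γ hdec '' ((Γ n : Subgroup G) : Set G)) f) ∧
      (f ∈ stabAut Γ hdec ↔ f ∈ TFGR ↥(Odo Γ hdec)) := by
  intro f
  have hopen := mem_stabAut_iff_isOpen_leftCommutant Γ hdec f
  refine ⟨⟨fun h => exists_isAutLOn_tau_of_isOpen_leftCommutant Γ hdec (hopen.1 h), ?_⟩,
    hopen.trans (inFullR_iff_isOpen_leftCommutant f).symm⟩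
  rintro ⟨n, hn⟩
  exact ⟨Γ n, inferInstance, hn⟩

/-- `Aut^∞(X,G)_L = ⋃ₙ Aut(X,Γₙ)_L = [[X]]_R`. -/
theorem stmt17 {G : Type*} [Group G] (Γ : ℕ → Subgroup G) [∀ n, (Γ n).Normal]
    [∀ n, (Γ n).FiniteIndex] (hdec : ∀ n, Γ (n + 1) ≤ Γ n)
    (htriv : ∀ g : G, (∀ n, g ∈ Γ n) → g = 1) [Infinite G] :
    ∀ f : ↥(Odo Γ hdec) ≃ₜ ↥(Odo Γ hdec),
      (f ∈ stabAut Γ hdec ↔ ∃ n, IsAutLOn ↥(Odo Γ hdec) (tau Γ hdec '' ((Γ n : Subgroup G) : Set G)) f) ∧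
      (f ∈ stabAut Γ hdec ↔ f ∈ TFGR ↥(Odo Γ hdec)) :=
  stmt17_general Γ hdec

end OdoPaper
end
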